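/- Let V : (0,∞) → M₂(ℂ) be continuous, E₁, E₂, k² ∈ ℂ, and let u₁, u₂, ψ₀ : (0,∞) → M₂(ℂ) be twice differentiable invertible matrix solutions of −u_j'' + Vu_j = E_j u_j (j=1,2) and −ψ₀'' + Vψ₀ = k²ψ₀. Set w_j = u_j'u_j⁻¹, w_k = ψ₀'ψ₀⁻¹, assume w₂(r) − w₁(r) is invertible for all r, set W₂ = (E₁−E₂)(w₂−w₁)⁻¹, ũ₂ = (w₁−w₂)u₂, and w̃₂ = ũ₂'ũ₂⁻¹. Then for all r, (w̃₂ − ∂_r)((w₁ − ∂_r)ψ₀)(r) = [(−k² + E₁)·I + W₂(r)(w₁(r) − w_k(r))] ψ₀(r). -/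

import Mathlib

/-!
The superpotential `w = u'u⁻¹` of a solution at energy `E` satisfies the Riccati equation
`w' = V - E - w²`, and then `L₁ = w₁ - ∂` intertwines: `(L₁ψ)' = (E - E₁)ψ - w₁ L₁ψ` for every
solution `ψ` at energy `E`. For `ψ = u₂` this gives `w̃₂ = W₂ - w₁`, i.e. `W₂ = w₁ + w̃₂`; for
`ψ = ψ₀` it gives `(w̃₂ - ∂)L₁ψ₀ = W₂ L₁ψ₀ + (E₁ - k²)ψ₀`, and `L₁ψ₀ = (w₁ - w_k)ψ₀`.
-/

open Matrix Set Filter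

namespace Matrix

variable {l m n 𝕜 : Type*} [RCLike 𝕜]

/-- Matrices carry no global norm, so derivatives of matrix-valued functions are taken
entrywise. -/
def HasEntrywiseDerivAt (f : ℝ → Matrix m n 𝕜) (f' : Matrix m n 𝕜) (x : ℝ) : Prop :=
  ∀ i j, HasDerivAt (fun t => f t i j) (f' i j) x

open scoped Matrix.Norms.Operator in
theorem hasDerivAt_iff_hasEntrywiseDerivAt [Fintype m] [Fintype n] {f : ℝ → Matrix m n 𝕜}
    {f' : Matrix m n 𝕜} {x : ℝ} : HasDerivAt f f' x ↔ HasEntrywiseDerivAt f f' x := by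
  refine hasDerivAt_iff_tendsto_slope.trans ?_
  simp only [HasEntrywiseDerivAt, hasDerivAt_iff_tendsto_slope]
  exact tendsto_pi_nhds.trans (forall_congr' fun _ => tendsto_pi_nhds)

namespace HasEntrywiseDerivAt

variable {f g : ℝ → Matrix m n 𝕜} {f' g' : Matrix m n 𝕜} {x : ℝ}

theorem sub (hf : HasEntrywiseDerivAt f f' x) (hg : HasEntrywiseDerivAt g g' x) :
    HasEntrywiseDerivAt (fun t => f t - g t) (f' - g') x :=
  fun i j => (hf i j).sub (hg i j)

theorem unique (hf : HasEntrywiseDerivAt f f' x) (hg : HasEntrywiseDerivAt f g' x) : f' = g' :=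
  ext fun i j => (hf i j).unique (hg i j)

theorem congr_of_eventuallyEq (hf : HasEntrywiseDerivAt f f' x) (h : g =ᶠ[nhds x] f) :
    HasEntrywiseDerivAt g f' x :=
  fun i j => (hf i j).congr_of_eventuallyEq (h.mono fun _ ht => congrArg (· i j) ht)

theorem mul [Fintype m] {f : ℝ → Matrix l m 𝕜} {g : ℝ → Matrix m n 𝕜} {f' : Matrix l m 𝕜}
    {g' : Matrix m n 𝕜} (hf : HasEntrywiseDerivAt f f' x) (hg : HasEntrywiseDerivAt g g' x) :
    HasEntrywiseDerivAt (fun t => f t * g t) (f' * g x + f x * g') x := fun i j => by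
  simpa only [mul_apply, add_apply, ← Finset.sum_add_distrib] using
    HasDerivAt.fun_sum fun k _ => (hf i k).fun_mul (hg k j)

theorem inv [Fintype n] [DecidableEq n] {f : ℝ → Matrix n n 𝕜} {f' : Matrix n n 𝕜}
    (hf : HasEntrywiseDerivAt f f' x) (hx : IsUnit (f x)) :
    HasEntrywiseDerivAt (fun t => (f t)⁻¹) (-((f x)⁻¹ * f' * (f x)⁻¹)) x := by
  open scoped Matrix.Norms.Operator in
  · obtain ⟨u, hu⟩ := hx
    have hinv := hasFDerivAt_ringInverse (𝕜 := ℝ) u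
    rw [hu] at hinv
    have hu' : (↑u⁻¹ : Matrix n n 𝕜) = (f x)⁻¹ := by
      rw [← hu, nonsing_inv_eq_ringInverse, Ring.inverse_unit]
    have hfun : Ring.inverse ∘ f = fun t => (f t)⁻¹ :=
      funext fun t => (nonsing_inv_eq_ringInverse (f t)).symm
    have h := hinv.comp_hasDerivAt x (hasDerivAt_iff_hasEntrywiseDerivAt.2 hf)
    rw [hfun, hu'] at h
    exact hasDerivAt_iff_hasEntrywiseDerivAt.1 h

end HasEntrywiseDerivAt

variable [Fintype n] [DecidableEq n]

theorem hasEntrywiseDerivAt_superpotential {u u' : ℝ → Matrix n n 𝕜} {u'' V : Matrix n n 𝕜}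
    {E : 𝕜} {r : ℝ} (hu : HasEntrywiseDerivAt u (u' r) r) (hu' : HasEntrywiseDerivAt u' u'' r)
    (hsch : -u'' + V * u r = E • u r) (hunit : IsUnit (u r)) :
    HasEntrywiseDerivAt (fun t => u' t * (u t)⁻¹)
      (V - E • 1 - u' r * (u r)⁻¹ * (u' r * (u r)⁻¹)) r := by
  have hdet := (isUnit_iff_isUnit_det _).1 hunit
  have hu'' : u'' = V * u r - E • u r := by rw [← hsch]; abel
  convert hu'.mul (hu.inv hunit) using 1
  rw [hu'', sub_mul, mul_nonsing_inv_cancel_right _ _ hdet, smul_mul_assoc, mul_nonsing_inv _ hdet]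
  noncomm_ring

theorem hasEntrywiseDerivAt_susyTransform {w ψ ψ' : ℝ → Matrix n n 𝕜} {ψ'' V : Matrix n n 𝕜}
    {E₁ E : 𝕜} {r : ℝ} (hw : HasEntrywiseDerivAt w (V - E₁ • 1 - w r * w r) r)
    (hψ : HasEntrywiseDerivAt ψ (ψ' r) r) (hψ' : HasEntrywiseDerivAt ψ' ψ'' r)
    (hsch : -ψ'' + V * ψ r = E • ψ r) :
    HasEntrywiseDerivAt (fun t => w t * ψ t - ψ' t)
      ((E - E₁) • ψ r - w r * (w r * ψ r - ψ' r)) r := by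
  have hψ'' : ψ'' = V * ψ r - E • ψ r := by rw [← hsch]; abel
  convert (hw.mul hψ).sub hψ' using 1
  rw [hψ'', sub_smul]
  simp only [sub_mul, smul_mul_assoc, one_mul]
  noncomm_ring

theorem transformed_superpotential_eq {w₁ w₂ u : Matrix n n 𝕜} (E₁ E₂ : 𝕜)
    (hw : IsUnit (w₂ - w₁)) (hu : IsUnit u) :
    ((E₂ - E₁) • u - w₁ * ((w₁ - w₂) * u)) * ((w₁ - w₂) * u)⁻¹
      = (E₁ - E₂) • (w₂ - w₁)⁻¹ - w₁ := by
  have hneg : (w₁ - w₂)⁻¹ = -(w₂ - w₁)⁻¹ := by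
    refine inv_eq_left_inv ?_
    rw [← neg_sub w₂ w₁, neg_mul_neg, nonsing_inv_mul _ ((isUnit_iff_isUnit_det _).1 hw)]
  have hunit : IsUnit ((w₁ - w₂) * u) := by
    rw [← neg_sub w₂ w₁, neg_mul]
    exact (hw.mul hu).neg
  rw [sub_mul, mul_nonsing_inv_cancel_right _ _ ((isUnit_iff_isUnit_det _).1 hunit), mul_inv_rev,
    smul_mul_assoc, mul_nonsing_inv_cancel_left _ _ ((isUnit_iff_isUnit_det _).1 hu), hneg,
    smul_neg, ← neg_smul, neg_sub]

end Matrix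

theorem twofold_SUSY_action_asymmetric_form_general
    (V u₁ u₁' u₁'' u₂ u₂' u₂'' ψ₀ ψ₀' ψ₀'' : ℝ → Matrix (Fin 2) (Fin 2) ℂ)
    (E₁ E₂ k2 : ℂ)
    (hu₁ : ∀ r ∈ Ioi (0:ℝ), ∀ i j, HasDerivAt (fun t => u₁ t i j) (u₁' r i j) r)
    (hu₁' : ∀ r ∈ Ioi (0:ℝ), ∀ i j, HasDerivAt (fun t => u₁' t i j) (u₁'' r i j) r)
    (hu₂ : ∀ r ∈ Ioi (0:ℝ), ∀ i j, HasDerivAt (fun t => u₂ t i j) (u₂' r i j) r)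
    (hu₂' : ∀ r ∈ Ioi (0:ℝ), ∀ i j, HasDerivAt (fun t => u₂' t i j) (u₂'' r i j) r)
    (hψ₀ : ∀ r ∈ Ioi (0:ℝ), ∀ i j, HasDerivAt (fun t => ψ₀ t i j) (ψ₀' r i j) r)
    (hψ₀' : ∀ r ∈ Ioi (0:ℝ), ∀ i j, HasDerivAt (fun t => ψ₀' t i j) (ψ₀'' r i j) r)
    (heq₁ : ∀ r ∈ Ioi (0:ℝ), -u₁'' r + V r * u₁ r = E₁ • u₁ r)
    (heq₂ : ∀ r ∈ Ioi (0:ℝ), -u₂'' r + V r * u₂ r = E₂ • u₂ r)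
    (heqψ : ∀ r ∈ Ioi (0:ℝ), -ψ₀'' r + V r * ψ₀ r = k2 • ψ₀ r)
    (hinv₁ : ∀ r ∈ Ioi (0:ℝ), IsUnit (u₁ r))
    (hinv₂ : ∀ r ∈ Ioi (0:ℝ), IsUnit (u₂ r))
    (hinvψ : ∀ r ∈ Ioi (0:ℝ), IsUnit (ψ₀ r))
    (w₁ w₂ wk : ℝ → Matrix (Fin 2) (Fin 2) ℂ)
    (hw₁ : ∀ r, w₁ r = u₁' r * (u₁ r)⁻¹)
    (hw₂ : ∀ r, w₂ r = u₂' r * (u₂ r)⁻¹)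
    (hwk : ∀ r, wk r = ψ₀' r * (ψ₀ r)⁻¹)
    (hinvw : ∀ r ∈ Ioi (0:ℝ), IsUnit (w₂ r - w₁ r))
    (W₂ : ℝ → Matrix (Fin 2) (Fin 2) ℂ)
    (hW₂ : ∀ r, W₂ r = (E₁ - E₂) • (w₂ r - w₁ r)⁻¹)
    (tu₂ tu₂' : ℝ → Matrix (Fin 2) (Fin 2) ℂ)
    (htu₂ : ∀ r, tu₂ r = (w₁ r - w₂ r) * u₂ r)
    (htu₂' : ∀ r ∈ Ioi (0:ℝ), ∀ i j, HasDerivAt (fun t => tu₂ t i j) (tu₂' r i j) r)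
    (tw₂ : ℝ → Matrix (Fin 2) (Fin 2) ℂ)
    (htw₂ : ∀ r, tw₂ r = tu₂' r * (tu₂ r)⁻¹)
    (g g' : ℝ → Matrix (Fin 2) (Fin 2) ℂ)
    (hg : ∀ r, g r = w₁ r * ψ₀ r - ψ₀' r)
    (hg' : ∀ r ∈ Ioi (0:ℝ), ∀ i j, HasDerivAt (fun t => g t i j) (g' r i j) r) :
    ∀ r ∈ Ioi (0:ℝ),
      tw₂ r * g r - g' r
        = ((-k2 + E₁) • (1 : Matrix (Fin 2) (Fin 2) ℂ)
            + W₂ r * (w₁ r - wk r)) * ψ₀ r := by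
  intro r hr
  have hw₁' : HasEntrywiseDerivAt w₁ (V r - E₁ • 1 - w₁ r * w₁ r) r := by
    simpa only [← hw₁] using
      hasEntrywiseDerivAt_superpotential (hu₁ r hr) (hu₁' r hr) (heq₁ r hr) (hinv₁ r hr)
  have htu₂_eq : ∀ t ∈ Ioi (0:ℝ), tu₂ t = w₁ t * u₂ t - u₂' t := fun t ht => by
    rw [htu₂, hw₂, sub_mul,
      nonsing_inv_mul_cancel_right _ _ ((isUnit_iff_isUnit_det _).1 (hinv₂ t ht))]
  have htu₂'_eq : tu₂' r = (E₂ - E₁) • u₂ r - w₁ r * tu₂ r := by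
    rw [htu₂_eq r hr]
    refine HasEntrywiseDerivAt.unique (htu₂' r hr) ?_
    refine HasEntrywiseDerivAt.congr_of_eventuallyEq ?_
      (eventually_of_mem (isOpen_Ioi.mem_nhds hr) htu₂_eq)
    exact hasEntrywiseDerivAt_susyTransform hw₁' (hu₂ r hr) (hu₂' r hr) (heq₂ r hr)
  have hg'_eq : g' r = (k2 - E₁) • ψ₀ r - w₁ r * g r := by
    rw [hg]
    refine HasEntrywiseDerivAt.unique (hg' r hr) ?_
    simpa only [← hg] using
      hasEntrywiseDerivAt_susyTransform hw₁' (hψ₀ r hr) (hψ₀' r hr) (heqψ r hr)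
  have htw₂_eq : tw₂ r = W₂ r - w₁ r := by
    rw [htw₂, htu₂'_eq, htu₂, hW₂]
    exact transformed_superpotential_eq E₁ E₂ (hinvw r hr) (hinv₂ r hr)
  have hg_eq : g r = (w₁ r - wk r) * ψ₀ r := by
    rw [hg, sub_mul, hwk,
      nonsing_inv_mul_cancel_right _ _ ((isUnit_iff_isUnit_det _).1 (hinvψ r hr))]
  rw [htw₂_eq, hg'_eq, hg_eq, add_mul, smul_mul_assoc, one_mul, mul_assoc, sub_mul,
    show -k2 + E₁ = -(k2 - E₁) by ring, neg_smul]
  abel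

/-- Action of the two-fold SUSY transformation operator `L = (w̃₂ - ∂)(w₁ - ∂)` on a
matrix solution `ψ₀` of the initial Schrödinger equation:
`Lψ₀ = [(-k² + E₁)·1 + W₂(w₁ - w_k)]ψ₀`, with `W₂ = (E₁-E₂)(w₂-w₁)⁻¹`. -/
theorem twofold_SUSY_action_asymmetric_form
    (V u₁ u₁' u₁'' u₂ u₂' u₂'' ψ₀ ψ₀' ψ₀'' : ℝ → Matrix (Fin 2) (Fin 2) ℂ)
    (E₁ E₂ k2 : ℂ)
    (hV : ContinuousOn V (Ioi 0))
    (hu₁ : ∀ r ∈ Ioi (0:ℝ), ∀ i j, HasDerivAt (fun t => u₁ t i j) (u₁' r i j) r)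
    (hu₁' : ∀ r ∈ Ioi (0:ℝ), ∀ i j, HasDerivAt (fun t => u₁' t i j) (u₁'' r i j) r)
    (hu₂ : ∀ r ∈ Ioi (0:ℝ), ∀ i j, HasDerivAt (fun t => u₂ t i j) (u₂' r i j) r)
    (hu₂' : ∀ r ∈ Ioi (0:ℝ), ∀ i j, HasDerivAt (fun t => u₂' t i j) (u₂'' r i j) r)
    (hψ₀ : ∀ r ∈ Ioi (0:ℝ), ∀ i j, HasDerivAt (fun t => ψ₀ t i j) (ψ₀' r i j) r)
    (hψ₀' : ∀ r ∈ Ioi (0:ℝ), ∀ i j, HasDerivAt (fun t => ψ₀' t i j) (ψ₀'' r i j) r)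
    (heq₁ : ∀ r ∈ Ioi (0:ℝ), -u₁'' r + V r * u₁ r = E₁ • u₁ r)
    (heq₂ : ∀ r ∈ Ioi (0:ℝ), -u₂'' r + V r * u₂ r = E₂ • u₂ r)
    (heqψ : ∀ r ∈ Ioi (0:ℝ), -ψ₀'' r + V r * ψ₀ r = k2 • ψ₀ r)
    (hinv₁ : ∀ r ∈ Ioi (0:ℝ), IsUnit (u₁ r))
    (hinv₂ : ∀ r ∈ Ioi (0:ℝ), IsUnit (u₂ r))
    (hinvψ : ∀ r ∈ Ioi (0:ℝ), IsUnit (ψ₀ r))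
    (w₁ w₂ wk : ℝ → Matrix (Fin 2) (Fin 2) ℂ)
    (hw₁ : ∀ r, w₁ r = u₁' r * (u₁ r)⁻¹)
    (hw₂ : ∀ r, w₂ r = u₂' r * (u₂ r)⁻¹)
    (hwk : ∀ r, wk r = ψ₀' r * (ψ₀ r)⁻¹)
    (hinvw : ∀ r ∈ Ioi (0:ℝ), IsUnit (w₂ r - w₁ r))
    (W₂ : ℝ → Matrix (Fin 2) (Fin 2) ℂ)
    (hW₂ : ∀ r, W₂ r = (E₁ - E₂) • (w₂ r - w₁ r)⁻¹)
    (tu₂ tu₂' : ℝ → Matrix (Fin 2) (Fin 2) ℂ)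
    (htu₂ : ∀ r, tu₂ r = (w₁ r - w₂ r) * u₂ r)
    (htu₂' : ∀ r ∈ Ioi (0:ℝ), ∀ i j, HasDerivAt (fun t => tu₂ t i j) (tu₂' r i j) r)
    (tw₂ : ℝ → Matrix (Fin 2) (Fin 2) ℂ)
    (htw₂ : ∀ r, tw₂ r = tu₂' r * (tu₂ r)⁻¹)
    (g g' : ℝ → Matrix (Fin 2) (Fin 2) ℂ)
    (hg : ∀ r, g r = w₁ r * ψ₀ r - ψ₀' r)
    (hg' : ∀ r ∈ Ioi (0:ℝ), ∀ i j, HasDerivAt (fun t => g t i j) (g' r i j) r) :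
    ∀ r ∈ Ioi (0:ℝ),
      tw₂ r * g r - g' r
        = ((-k2 + E₁) • (1 : Matrix (Fin 2) (Fin 2) ℂ)
            + W₂ r * (w₁ r - wk r)) * ψ₀ r :=
  twofold_SUSY_action_asymmetric_form_general V u₁ u₁' u₁'' u₂ u₂' u₂'' ψ₀ ψ₀' ψ₀'' E₁ E₂ k2 hu₁
    hu₁' hu₂ hu₂' hψ₀ hψ₀' heq₁ heq₂ heqψ hinv₁ hinv₂ hinvψ w₁ w₂ wk hw₁ hw₂ hwk hinvw W₂ hW₂ tu₂
    tu₂' htu₂ htu₂' tw₂ htw₂ g g' hg hg'
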